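/- For every N ∈ ℕ and every h ∈ ℝ, the map β ↦ 𝔼[log Z_{N,ω}(β,h)] is non-increasing on [0,∞); equivalently, for every β ≥ 0, (∂/∂β) 𝔼[log Z_{N,ω}(β,h)] = 𝔼[(∂/∂β) log Z_{N,ω}(β,h)] ≤ 0. -/

import Mathlib

open MeasureTheory ProbabilityTheory Filter Set Real
open scoped ENNReal NNReal Topology BigOperators

noncomputable section

attribute [local instance] Classical.propDecidable

/-- `L : (0,∞) → (0,∞)` is slowly varying: measurable, positive on `(0,∞)`, and
`L(cx)/L(x) → 1` as `x → ∞` for every `c > 0`. -/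
def SlowlyVarying (L : ℝ → ℝ) : Prop :=
  Measurable L ∧ (∀ x : ℝ, 0 < x → 0 < L x) ∧
    ∀ c : ℝ, 0 < c → Tendsto (fun x => L (c * x) / L x) atTop (nhds 1)

variable {Ω₁ Ω₂ : Type*}

/-- `(P, τ)` is a (persistent, non-delayed, discrete) renewal process with inter-arrival
law `K`: `τ 0 = 0` and the increments `τ (j+1) - τ j` are IID `ℕ`-valued (`≥ 1`, which is
encoded by strict monotonicity of `j ↦ τ j`) with common law `K`. -/
def IsRenewal [MeasurableSpace Ω₁] (P : Measure Ω₁) (τ : ℕ → Ω₁ → ℕ) (K : ℕ → ℝ) : Prop :=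
  IsProbabilityMeasure P ∧ (∀ x, τ 0 x = 0) ∧ (∀ j, Measurable (τ j)) ∧
  (∀ x, StrictMono fun j => τ j x) ∧
  iIndepFun (fun j x => τ (j + 1) x - τ j x) P ∧
  (∀ j, IdentDistrib (fun x => τ (j + 1) x - τ j x) (τ 1) P P) ∧
  (∀ n : ℕ, K n = (P {x | τ 1 x = n}).toReal)

/-- The disorder `(Q, ω)`: an IID sequence of centered real random variables with
unit variance and finite exponential moments. -/
def IsDisorder [MeasurableSpace Ω₂] (Q : Measure Ω₂) (ω : ℕ → Ω₂ → ℝ) : Prop :=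
  IsProbabilityMeasure Q ∧ (∀ n, Measurable (ω n)) ∧
  iIndepFun ω Q ∧ (∀ n, IdentDistrib (ω n) (ω 1) Q Q) ∧
  (∫ y, ω 1 y ∂Q) = 0 ∧ (∫ y, (ω 1 y) ^ 2 ∂Q) = 1 ∧
  (∀ t : ℝ, Integrable (fun y => Real.exp (t * ω 1 y)) Q)

/-- `K(n) = L(n)/n^(1+α)` for `n = 1, 2, …`. -/
def HasRegVaryingTail (K : ℕ → ℝ) (L : ℝ → ℝ) (α : ℝ) : Prop :=
  ∀ n : ℕ, 1 ≤ n → K n = L n / (n : ℝ) ^ (1 + α)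

/-- `δ_n = 1_{n ∈ τ}`. -/
def pinDelta (τ : ℕ → Ω₁ → ℕ) (n : ℕ) (x : Ω₁) : ℝ :=
  if ∃ j, τ j x = n then 1 else 0

/-- The moment generating function `M(t) = 𝔼[exp(t ω₁)]`. -/
def pinMgf [MeasurableSpace Ω₂] (Q : Measure Ω₂) (ω : ℕ → Ω₂ → ℝ) (t : ℝ) : ℝ :=
  ∫ y, Real.exp (t * ω 1 y) ∂Q

/-- The quenched partition function
`Z_{N,ω}(β,h) = E[exp (∑_{n=1}^N (β ω_n + h - log M(β)) δ_n) δ_N]`. -/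
def pinZ [MeasurableSpace Ω₁] [MeasurableSpace Ω₂] (P : Measure Ω₁) (Q : Measure Ω₂)
    (τ : ℕ → Ω₁ → ℕ) (ω : ℕ → Ω₂ → ℝ) (N : ℕ) (β h : ℝ) (y : Ω₂) : ℝ :=
  ∫ x, Real.exp (∑ n ∈ Finset.Icc 1 N,
      (β * ω n y + h - Real.log (pinMgf Q ω β)) * pinDelta τ n x) * pinDelta τ N x ∂P

/-- The pure (annealed, `β = 0`) partition function `Z_N(0,h) = E[exp(h ∑_{n=1}^N δ_n) δ_N]`. -/
def pinZpure [MeasurableSpace Ω₁] (P : Measure Ω₁) (τ : ℕ → Ω₁ → ℕ) (N : ℕ) (h : ℝ) : ℝ :=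
  ∫ x, Real.exp (h * ∑ n ∈ Finset.Icc 1 N, pinDelta τ n x) * pinDelta τ N x ∂P

/-- `F` is the quenched free energy:
`F β h = lim_{N→∞} (1/N) 𝔼[log Z_{N,ω}(β,h)]` for all `β, h` (the limit exists by
superadditivity). -/
def IsFreeEnergy [MeasurableSpace Ω₁] [MeasurableSpace Ω₂] (P : Measure Ω₁) (Q : Measure Ω₂)
    (τ : ℕ → Ω₁ → ℕ) (ω : ℕ → Ω₂ → ℝ) (F : ℝ → ℝ → ℝ) : Prop :=
  ∀ β h : ℝ, Tendsto
    (fun N : ℕ => (∫ y, Real.log (pinZ P Q τ ω N β h y) ∂Q) / N) atTop (nhds (F β h))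

/-- The critical point `h_c(β) = sup {h : F(β,h) = 0}`. -/
def pinHc (F : ℝ → ℝ → ℝ) (β : ℝ) : ℝ :=
  sSup {h : ℝ | F β h = 0}

/-- `L̃(x) = ∫_0^x dy / ((1+y) L(y)²)`. -/
def Ltilde (L : ℝ → ℝ) (x : ℝ) : ℝ :=
  ∫ y in (0:ℝ)..x, 1 / ((1 + y) * (L y) ^ 2)

/-- The coarse-graining length
`k(β; q, A) = inf {n ∈ ℕ : L̃(n)/L(n)^{2/(q-1)} ≥ A β^{-2q/(q-1)}}`. -/
def kCoarse (L : ℝ → ℝ) (q : ℕ) (A β : ℝ) : ℕ :=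
  sInf {n : ℕ | 1 ≤ n ∧
    A * β ^ (-(2 * (q : ℝ) / ((q : ℝ) - 1))) ≤ Ltilde L n / (L n) ^ ((2 : ℝ) / ((q : ℝ) - 1))}

/-- `Δ(β; q, A) = 1 / k(β; q, A)`. -/
def DeltaShift (L : ℝ → ℝ) (q : ℕ) (A β : ℝ) : ℝ :=
  ((kCoarse L q A β : ℝ))⁻¹

/-- `R_{1/2}(x) = 1/(√(x+1) 𝐋(x+1))`. -/
def R12 (Lbold : ℝ → ℝ) (x : ℝ) : ℝ := 1 / (Real.sqrt (x + 1) * Lbold (x + 1))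

/-- the `a`-th gap of the non-decreasing rearrangement of the tuple `i`. -/
def sortedGaps (q : ℕ) (i : Fin q → ℕ) (a : ℕ) : ℕ :=
  (List.insertionSort (· ≤ ·) (List.ofFn i)).getD (a + 1) 0 -
    (List.insertionSort (· ≤ ·) (List.ofFn i)).getD a 0

/-- `U(i) = ∏_{a=2}^q R_{1/2}(s(i)_a - s(i)_{a-1})`, `s(i)` being the non-decreasing
rearrangement of `i`. -/
def Usort (Lbold : ℝ → ℝ) {q : ℕ} (i : Fin q → ℕ) : ℝ :=
  ∏ a ∈ Finset.range (q - 1), R12 Lbold (sortedGaps q i a)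

/-- `V_k(i) = (q! k 𝐋̃(k)^{q-1})^{-1/2} U(i) 1{i has pairwise distinct coordinates}`. -/
def Vk (Lbold : ℝ → ℝ) (q k : ℕ) (i : Fin q → ℕ) : ℝ :=
  if Function.Injective i then
    (Real.sqrt ((q.factorial : ℝ) * k * (Ltilde Lbold k) ^ (q - 1)))⁻¹ * Usort Lbold i
  else 0

/-- `X_j = ∑_{i ∈ B_j^q} V_k(i - (j-1)k(1,…,1)) ω_{i_1} ⋯ ω_{i_q}`, as a function of the
disorder configuration `ω : ℕ → ℝ`. -/
def Xblock (Lbold : ℝ → ℝ) (q k j : ℕ) (ω : ℕ → ℝ) : ℝ :=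
  ∑ i : Fin q → Fin k, Vk Lbold q k (fun a => (i a : ℕ) + 1) *
    ∏ a : Fin q, ω ((j - 1) * k + ((i a : ℕ) + 1))

/-- `f_K(x) = -K 1{x ≥ exp(K²)}`. -/
def cutoffF (K x : ℝ) : ℝ := if Real.exp (K ^ 2) ≤ x then -K else 0

/-- the block `B_i = {(i-1)k+1, …, ik}`. -/
def Bblock (k i : ℕ) : Finset ℕ := Finset.Icc ((i - 1) * k + 1) (i * k)

/-- `E_I`: in `{1,…,km}` the renewal intersects exactly the blocks `B_i`, `i ∈ I`. -/
def EIset (τ : ℕ → Ω₁ → ℕ) (k m : ℕ) (I : Finset ℕ) : Set Ω₁ :=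
  {x | (∀ n ∈ Finset.Icc 1 (k * m), (∃ j, τ j x = n) → ∃ i ∈ I, n ∈ Bblock k i) ∧
       (∀ i ∈ I, ∃ n ∈ Bblock k i, ∃ j, τ j x = n)}

/-- `Ẑ_ω^I`, the partition function restricted to the event `E_I`. -/
def hatZI [MeasurableSpace Ω₁] [MeasurableSpace Ω₂] (P : Measure Ω₁) (Q : Measure Ω₂)
    (τ : ℕ → Ω₁ → ℕ) (ω : ℕ → Ω₂ → ℝ) (β h : ℝ) (k m : ℕ) (I : Finset ℕ) (y : Ω₂) : ℝ :=
  ∫ x, Real.exp (∑ n ∈ Finset.Icc 1 (k * m),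
      (β * ω n y + h - Real.log (pinMgf Q ω β)) * pinDelta τ n x)
    * pinDelta τ (k * m) x * (EIset τ k m I).indicator (fun _ => (1 : ℝ)) x ∂P

/-- `P_I = P(E_I ; N ∈ τ)` with `N = km`. -/
def PIprob [MeasurableSpace Ω₁] (P : Measure Ω₁) (τ : ℕ → Ω₁ → ℕ) (k m : ℕ)
    (I : Finset ℕ) : ℝ :=
  (P (EIset τ k m I ∩ {x | ∃ j, τ j x = k * m})).toReal

/-- `Z_{d,f}` at `h = 0`: the partition function on `{d+1,…,f}` pinned at `f`,
conditionally on `d ∈ τ`. -/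
def Zdf [MeasurableSpace Ω₁] [MeasurableSpace Ω₂] (P : Measure Ω₁) (Q : Measure Ω₂)
    (τ : ℕ → Ω₁ → ℕ) (ω : ℕ → Ω₂ → ℝ) (β : ℝ) (d f : ℕ) (y : Ω₂) : ℝ :=
  ∫ x, Real.exp (∑ n ∈ Finset.Icc (d + 1) f,
      (β * ω n y - Real.log (pinMgf Q ω β)) * pinDelta τ n x) * pinDelta τ f x
    ∂(P[|{x | ∃ j, τ j x = d}])

/-- the density of the tilted disorder law `P̂_τ(dω) = exp(∑_{n=d}^f (βω_n - log M(β)) δ_n) ℙ(dω)`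
with respect to `ℙ`, for a fixed renewal trajectory `x`. -/
def tiltDensity [MeasurableSpace Ω₂] (Q : Measure Ω₂) (τ : ℕ → Ω₁ → ℕ) (ω : ℕ → Ω₂ → ℝ)
    (β : ℝ) (d f : ℕ) (x : Ω₁) (y : Ω₂) : ℝ :=
  Real.exp (∑ n ∈ Finset.Icc d f, (β * ω n y - Real.log (pinMgf Q ω β)) * pinDelta τ n x)

/-- `Ê_τ X`, the mean of `X = X_1` under the tilted disorder law `P̂_τ`. -/
def EhatX [MeasurableSpace Ω₂] (Q : Measure Ω₂) (τ : ℕ → Ω₁ → ℕ) (ω : ℕ → Ω₂ → ℝ)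
    (Lbold : ℝ → ℝ) (q k : ℕ) (β : ℝ) (d f : ℕ) (x : Ω₁) : ℝ :=
  ∫ y, Xblock Lbold q k 1 (fun n => ω n y) * tiltDensity Q τ ω β d f x y ∂Q

/-- `∏_{j=1}^{|I|} (i_j - i_{j-1})^p` where `i_1 < ⋯ < i_{|I|}` are the elements of `I` and
`i_0 = 0`. -/
def gapProd (I : Finset ℕ) (p : ℝ) : ℝ :=
  ∏ j : Fin I.card,
    ((((I.orderIsoOfFin rfl j).1 -
      (if (j : ℕ) = 0 then 0
       else (I.orderIsoOfFin rfl ⟨(j : ℕ) - 1, lt_of_le_of_lt (Nat.sub_le _ _) j.2⟩).1)) : ℕ) : ℝ) ^ p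

/-!
Summing over the set `J = τ ∩ [1, N]` of renewal points turns `Z_{N,ω}(β,h)` into the finite sum
`∑_J p_J exp (∑_{n ∈ J} (β ω_n + h - log M(β)))`, so that
`∂_β log Z = ∑_n (ω_n - c_β) μ_β(n ∈ τ)`, where `c_β = M'(β)/M(β)` is the mean of `ω_n` under the
`β`-tilted law and `μ_β` is the polymer measure. As a function of `ω_n` alone,
`μ_β(n ∈ τ) = e^{β ω_n} A / (e^{β ω_n} A + B)` with `A, B ≥ 0` independent of `ω_n`, so
`e^{-β ω_n} μ_β(n ∈ τ)` is nonincreasing in `ω_n`. Hence, pointwise,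
`(ω_n - c) μ_β(n ∈ τ) ≤ (ω_n - c) e^{β (ω_n - c)} μ_β(n ∈ τ)|_{ω_n = c}`, and the right-hand side
has mean zero by independence and the choice of `c = c_β`. Differentiation under `𝔼` is
justified by the bound `|∂_b log Z| ≤ ∑_n (|ω_n| + |c_b|)`.
-/

namespace Pinning

section PatternZ

variable (S : Finset ℕ) (p : Finset ℕ → ℝ)

def patternZ (a : ℕ → ℝ) : ℝ :=
  ∑ J ∈ S.powerset, p J * exp (∑ n ∈ J, a n)

def patternZMem (a : ℕ → ℝ) (n : ℕ) : ℝ :=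
  ∑ J ∈ S.powerset with n ∈ J, p J * exp (∑ m ∈ J, a m)

/-- The probability that `n ∈ τ` under the polymer measure with pattern weights `p` and
field `a`. -/
def patternGibbs (a : ℕ → ℝ) (n : ℕ) : ℝ :=
  patternZMem S p a n / patternZ S p a

@[fun_prop]
lemma measurable_patternZ : Measurable (patternZ S p) := by
  unfold patternZ; fun_prop

@[fun_prop]
lemma measurable_patternGibbs (n : ℕ) : Measurable (patternGibbs S p · n) := by
  unfold patternGibbs patternZMem patternZ; fun_prop

variable {S p}

lemma patternZMem_nonneg (hp : ∀ J, 0 ≤ p J) (a : ℕ → ℝ) (n : ℕ) :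
    0 ≤ patternZMem S p a n :=
  Finset.sum_nonneg fun J _ => mul_nonneg (hp J) (exp_pos _).le

lemma patternZ_nonneg (hp : ∀ J, 0 ≤ p J) (a : ℕ → ℝ) : 0 ≤ patternZ S p a :=
  Finset.sum_nonneg fun J _ => mul_nonneg (hp J) (exp_pos _).le

lemma patternZMem_le_patternZ (hp : ∀ J, 0 ≤ p J) (a : ℕ → ℝ) (n : ℕ) :
    patternZMem S p a n ≤ patternZ S p a :=
  Finset.sum_le_sum_of_subset_of_nonneg (Finset.filter_subset _ _)
    fun J _ _ => mul_nonneg (hp J) (exp_pos _).le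

lemma patternGibbs_mem_Icc (hp : ∀ J, 0 ≤ p J) (a : ℕ → ℝ) (n : ℕ) :
    patternGibbs S p a n ∈ Icc 0 1 := by
  have h0 := patternZMem_nonneg (S := S) hp a n
  have h1 := patternZMem_le_patternZ (S := S) hp a n
  exact ⟨div_nonneg h0 (h0.trans h1), div_le_one_of_le₀ h1 (h0.trans h1)⟩

lemma abs_sum_le_sum_abs_of_mem_powerset (a : ℕ → ℝ) {J : Finset ℕ} (hJ : J ∈ S.powerset) :
    |∑ n ∈ J, a n| ≤ ∑ n ∈ S, |a n| :=
  (Finset.abs_sum_le_sum_abs _ _).trans <| Finset.sum_le_sum_of_subset_of_nonneg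
    (Finset.mem_powerset.mp hJ) fun _ _ _ => abs_nonneg _

lemma exp_neg_mul_patternZ_zero_le (hp : ∀ J, 0 ≤ p J) (a : ℕ → ℝ) :
    exp (-∑ n ∈ S, |a n|) * patternZ S p 0 ≤ patternZ S p a := by
  simp only [patternZ, Pi.zero_apply, Finset.sum_const_zero, exp_zero, mul_one, Finset.mul_sum]
  refine Finset.sum_le_sum fun J hJ => ?_
  rw [mul_comm]
  exact mul_le_mul_of_nonneg_left (exp_le_exp.mpr (neg_le_of_abs_le
    (abs_sum_le_sum_abs_of_mem_powerset a hJ))) (hp J)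

lemma patternZ_le_exp_mul_patternZ_zero (hp : ∀ J, 0 ≤ p J) (a : ℕ → ℝ) :
    patternZ S p a ≤ exp (∑ n ∈ S, |a n|) * patternZ S p 0 := by
  simp only [patternZ, Pi.zero_apply, Finset.sum_const_zero, exp_zero, mul_one, Finset.mul_sum]
  refine Finset.sum_le_sum fun J hJ => ?_
  rw [mul_comm (exp _)]
  exact mul_le_mul_of_nonneg_left (exp_le_exp.mpr (le_of_abs_le
    (abs_sum_le_sum_abs_of_mem_powerset a hJ))) (hp J)

lemma patternZ_pos (hp : ∀ J, 0 ≤ p J) (h0 : 0 < patternZ S p 0) (a : ℕ → ℝ) :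
    0 < patternZ S p a :=
  (mul_pos (exp_pos _) h0).trans_le (exp_neg_mul_patternZ_zero_le hp a)

lemma patternZ_eq_zero (hp : ∀ J, 0 ≤ p J) (h0 : patternZ S p 0 = 0) (a : ℕ → ℝ) :
    patternZ S p a = 0 :=
  le_antisymm (by simpa [h0] using patternZ_le_exp_mul_patternZ_zero (S := S) hp a)
    (patternZ_nonneg hp a)

lemma abs_log_patternZ_le (hp : ∀ J, 0 ≤ p J) (a : ℕ → ℝ) :
    |log (patternZ S p a)| ≤ ∑ n ∈ S, |a n| + |log (patternZ S p 0)| := by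
  have hR : 0 ≤ ∑ n ∈ S, |a n| := Finset.sum_nonneg fun _ _ => abs_nonneg _
  rcases (patternZ_nonneg (S := S) hp 0).eq_or_lt with h0 | h0
  · rw [patternZ_eq_zero hp h0.symm, log_zero, abs_zero]; positivity
  have h1 := log_le_log (by positivity) (exp_neg_mul_patternZ_zero_le (S := S) hp a)
  have h2 := log_le_log (patternZ_pos hp h0 a) (patternZ_le_exp_mul_patternZ_zero (S := S) hp a)
  rw [log_mul (exp_pos _).ne' h0.ne', log_exp] at h1 h2
  rw [abs_le]
  constructor <;> linarith [neg_abs_le (log (patternZ S p 0)), le_abs_self (log (patternZ S p 0))]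

variable (S p) in
lemma sum_mul_sum_eq_sum_mul_patternZMem (a a' : ℕ → ℝ) :
    ∑ J ∈ S.powerset, p J * exp (∑ n ∈ J, a n) * ∑ n ∈ J, a' n
      = ∑ n ∈ S, a' n * patternZMem S p a n := by
  simp only [patternZMem, Finset.mul_sum]
  rw [Finset.sum_comm' (t' := S) (s' := fun n => S.powerset.filter (n ∈ ·)) fun J n => by
    simp only [Finset.mem_filter, Finset.mem_powerset]
    exact ⟨fun h => ⟨h, h.1 h.2⟩, fun h => h.1⟩]
  exact Finset.sum_congr rfl fun _ _ => Finset.sum_congr rfl fun _ _ => by ring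

lemma hasDerivAt_patternZ {a : ℝ → ℕ → ℝ} {a' : ℕ → ℝ} {b : ℝ}
    (ha : ∀ n, HasDerivAt (fun t => a t n) (a' n) b) :
    HasDerivAt (fun t => patternZ S p (a t)) (∑ n ∈ S, a' n * patternZMem S p (a b) n) b := by
  rw [← sum_mul_sum_eq_sum_mul_patternZMem]
  exact HasDerivAt.fun_sum fun J _ =>
    (((HasDerivAt.fun_sum fun n _ => ha n).exp).const_mul (p J)).congr_deriv (by ring)

lemma hasDerivAt_log_patternZ (hp : ∀ J, 0 ≤ p J) {a : ℝ → ℕ → ℝ} {a' : ℕ → ℝ} {b : ℝ}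
    (ha : ∀ n, HasDerivAt (fun t => a t n) (a' n) b) :
    HasDerivAt (fun t => log (patternZ S p (a t)))
      (∑ n ∈ S, a' n * patternGibbs S p (a b) n) b := by
  rcases (patternZ_nonneg (S := S) hp 0).eq_or_lt with h0 | h0
  -- all weights vanish: `log 0 = 0` and `0 / 0 = 0` make both sides zero
  · simp only [patternGibbs, patternZ_eq_zero hp h0.symm, div_zero, mul_zero,
      Finset.sum_const_zero, log_zero]
    exact hasDerivAt_const b 0
  · convert (hasDerivAt_patternZ ha).log (patternZ_pos hp h0 _).ne' using 1
    simp only [patternGibbs, Finset.sum_div, mul_div_assoc]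

lemma patternZMem_eq_exp_mul_update (a : ℕ → ℝ) (n : ℕ) (t : ℝ) :
    patternZMem S p a n = exp (a n - t) * patternZMem S p (Function.update a n t) n := by
  rw [patternZMem, patternZMem, Finset.mul_sum]
  refine Finset.sum_congr rfl fun J hJ => ?_
  have hnJ : n ∈ J := (Finset.mem_filter.mp hJ).2
  rw [← Finset.add_sum_erase J _ hnJ, ← Finset.add_sum_erase J _ hnJ, Function.update_self,
    Finset.sum_congr rfl fun m hm => Function.update_of_ne (Finset.ne_of_mem_erase hm) t a,
    mul_left_comm, ← exp_add]
  ring_nf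

lemma patternZ_sub_patternZMem_update (a : ℕ → ℝ) (n : ℕ) (t : ℝ) :
    patternZ S p (Function.update a n t) - patternZMem S p (Function.update a n t) n =
      patternZ S p a - patternZMem S p a n := by
  rw [patternZ, patternZ, patternZMem, patternZMem,
    ← Finset.sum_filter_add_sum_filter_not S.powerset (n ∈ ·),
    ← Finset.sum_filter_add_sum_filter_not S.powerset (n ∈ ·), add_sub_cancel_left,
    add_sub_cancel_left]
  refine Finset.sum_congr rfl fun J hJ => ?_
  rw [Finset.sum_congr rfl fun m hm =>
    Function.update_of_ne (ne_of_mem_of_not_mem hm (Finset.mem_filter.mp hJ).2) t a]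

lemma mul_exp_mul_div_le {A B d x : ℝ} (hA : 0 ≤ A) (hB : 0 ≤ B) (hdx : 0 ≤ d * x) :
    d * (exp x * A / (exp x * A + B)) ≤ d * (exp x * A / (A + B)) := by
  rcases hA.eq_or_lt with rfl | hA
  · simp
  have hnum : 0 ≤ exp x * A := by positivity
  rcases lt_trichotomy d 0 with hd | rfl | hd
  · have hx : exp x ≤ 1 := exp_le_one_iff.mpr (by nlinarith)
    exact mul_le_mul_of_nonpos_left (div_le_div_of_nonneg_left hnum (by positivity)
      (by nlinarith)) hd.le
  · simp
  · have hx : 1 ≤ exp x := one_le_exp_iff.mpr (by nlinarith)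
    exact mul_le_mul_of_nonneg_left (div_le_div_of_nonneg_left hnum (by positivity)
      (by nlinarith)) hd.le

lemma mul_patternGibbs_le (hp : ∀ J, 0 ≤ p J) (a : ℕ → ℝ) (n : ℕ) {t d : ℝ}
    (hd : 0 ≤ d * (a n - t)) :
    d * patternGibbs S p a n
      ≤ d * (exp (a n - t) * patternGibbs S p (Function.update a n t) n) := by
  have key := mul_exp_mul_div_le (patternZMem_nonneg (S := S) hp (Function.update a n t) n)
    (sub_nonneg.mpr (patternZMem_le_patternZ (S := S) hp (Function.update a n t) n)) hd
  rw [add_sub_cancel, ← patternZMem_eq_exp_mul_update, patternZ_sub_patternZMem_update,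
    add_sub_cancel] at key
  rwa [patternGibbs, patternGibbs, ← mul_div_assoc (exp _), ← patternZMem_eq_exp_mul_update]

end PatternZ

section RenewalPattern

variable [MeasurableSpace Ω₁] {τ : ℕ → Ω₁ → ℕ}

def renewalPattern (τ : ℕ → Ω₁ → ℕ) (N : ℕ) (x : Ω₁) : Finset ℕ :=
  (Finset.Icc 1 N).filter fun n => ∃ j, τ j x = n

def patternProb (P : Measure Ω₁) (τ : ℕ → Ω₁ → ℕ) (N : ℕ) (J : Finset ℕ) : ℝ :=
  P.real {x | renewalPattern τ N x = J ∧ ∃ j, τ j x = N}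

lemma measurableSet_exists_eq (hτ : ∀ j, Measurable (τ j)) (n : ℕ) :
    MeasurableSet {x | ∃ j, τ j x = n} := by
  rw [Set.ofPred_exists]
  exact MeasurableSet.iUnion fun j => hτ j (measurableSet_singleton n)

lemma measurableSet_renewalPattern_eq (hτ : ∀ j, Measurable (τ j)) (N : ℕ) (J : Finset ℕ) :
    MeasurableSet {x | renewalPattern τ N x = J ∧ ∃ j, τ j x = N} := by
  refine MeasurableSet.inter ?_ (measurableSet_exists_eq hτ N)
  refine measurableSet_setOfPred.mpr ?_
  simp only [Finset.ext_iff, renewalPattern, Finset.mem_filter]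
  exact Measurable.forall fun n =>
    (measurable_const.and (measurableSet_setOfPred.mp (measurableSet_exists_eq hτ n))).iff
      measurable_const

lemma integral_exp_sum_mul_pinDelta (P : Measure Ω₁) [IsFiniteMeasure P]
    (hτ : ∀ j, Measurable (τ j)) (N : ℕ) (a : ℕ → ℝ) :
    ∫ x, exp (∑ n ∈ Finset.Icc 1 N, a n * pinDelta τ n x) * pinDelta τ N x ∂P
      = patternZ (Finset.Icc 1 N) (patternProb P τ N) a := by
  have hpt : ∀ x, exp (∑ n ∈ Finset.Icc 1 N, a n * pinDelta τ n x) * pinDelta τ N x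
      = ∑ J ∈ (Finset.Icc 1 N).powerset,
          {x | renewalPattern τ N x = J ∧ ∃ j, τ j x = N}.indicator
            (fun _ => exp (∑ n ∈ J, a n)) x := by
    intro x
    by_cases hN : ∃ j, τ j x = N
    · simp only [Set.indicator_apply, Set.mem_ofPred_eq, hN, and_true, pinDelta, if_true,
        mul_one, Finset.sum_ite_eq, Finset.mem_powerset, renewalPattern, Finset.filter_subset,
        Finset.sum_filter, mul_ite, mul_zero]
    · simp [hN, pinDelta]
  simp only [hpt, patternZ, patternProb]
  rw [integral_finsetSum _ fun J _ =>
    (integrable_const _).indicator (measurableSet_renewalPattern_eq hτ N J)]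
  exact Finset.sum_congr rfl fun J _ => by
    rw [integral_indicator_const _ (measurableSet_renewalPattern_eq hτ N J), smul_eq_mul]

end RenewalPattern

section ExponentialMoments

variable {Ω : Type*} [MeasurableSpace Ω] {μ : Measure Ω} {X : Ω → ℝ}

lemma interior_integrableExpSet_eq_univ (hX : ∀ t, Integrable (fun y => exp (t * X y)) μ) :
    interior (integrableExpSet X μ) = univ := by
  simp [integrableExpSet, hX]

lemma continuous_deriv_cgf (hX : ∀ t, Integrable (fun y => exp (t * X y)) μ) :
    Continuous (deriv (cgf X μ)) := by
  rw [← continuousOn_univ, ← interior_integrableExpSet_eq_univ hX]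
  exact analyticOnNhd_cgf.deriv.continuousOn

/-- `deriv (cgf X μ) β` is the mean of `X` under the tilted law `exp (β X) μ / mgf X μ β`. -/
lemma integral_sub_mul_exp_sub_eq_zero [IsProbabilityMeasure μ]
    (hX : ∀ t, Integrable (fun y => exp (t * X y)) μ) (β : ℝ) :
    Integrable (fun y => (X y - deriv (cgf X μ) β) * exp (β * (X y - deriv (cgf X μ) β))) μ ∧
      ∫ y, (X y - deriv (cgf X μ) β) * exp (β * (X y - deriv (cgf X μ) β)) ∂μ = 0 := by
  have hβ : β ∈ interior (integrableExpSet X μ) := by simp [interior_integrableExpSet_eq_univ hX]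
  have hc : deriv (cgf X μ) β * mgf X μ β = ∫ y, X y * exp (β * X y) ∂μ := by
    rw [deriv_cgf hβ, div_mul_cancel₀ _ (mgf_pos (hX β)).ne']
  set c := deriv (cgf X μ) β
  have hXe : Integrable (fun y => X y * exp (β * X y)) μ := by
    simpa using integrable_pow_mul_exp_of_mem_interior_integrableExpSet hβ 1
  have hfun : (fun y => (X y - c) * exp (β * (X y - c)))
      = fun y => exp (-(β * c)) * (X y * exp (β * X y) - c * exp (β * X y)) := by
    funext y
    rw [mul_sub β, sub_eq_add_neg (β * X y), exp_add]
    ring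
  rw [hfun]
  refine ⟨(hXe.sub ((hX β).const_mul c)).const_mul _, ?_⟩
  rw [integral_const_mul, integral_sub hXe ((hX β).const_mul c), integral_const_mul]
  rw [← mgf, hc, sub_self, mul_zero]

end ExponentialMoments

section Disorder

lemma measurable_update_of_ne {mΩ : MeasurableSpace Ω₂} {ω : ℕ → Ω₂ → ℝ} {n : ℕ}
    (hm : ∀ i ≠ n, Measurable[mΩ] (ω i)) (c : ℝ) :
    Measurable[mΩ] fun y => Function.update (fun i => ω i y) n c := by
  refine @measurable_pi_lambda _ _ _ mΩ _ _ fun i => ?_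
  rcases eq_or_ne i n with rfl | hin
  · simp only [Function.update_self]
    exact measurable_const
  · simpa only [Function.update_of_ne hin] using hm i hin

variable [MeasurableSpace Ω₂] {Q : Measure Ω₂} {ω : ℕ → Ω₂ → ℝ}

lemma _root_.IsDisorder.integrable_exp_mul (hdis : IsDisorder Q ω) (n : ℕ) (t : ℝ) :
    Integrable (fun y => exp (t * ω n y)) Q :=
  ((hdis.2.2.2.1 n).comp (by fun_prop : Measurable fun x => exp (t * x))).integrable_iff.mpr
    (hdis.2.2.2.2.2.2 t)

lemma _root_.IsDisorder.integrable (hdis : IsDisorder Q ω) (n : ℕ) : Integrable (ω n) Q :=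
  integrable_of_mem_interior_integrableExpSet <| by
    simp [interior_integrableExpSet_eq_univ (hdis.integrable_exp_mul n)]

def pinField (Q : Measure Ω₂) (ω : ℕ → Ω₂ → ℝ) (h b : ℝ) (y : Ω₂) (n : ℕ) : ℝ :=
  b * ω n y + (h - log (pinMgf Q ω b))

lemma pinZ_eq_patternZ [MeasurableSpace Ω₁] (P : Measure Ω₁) [IsFiniteMeasure P]
    {τ : ℕ → Ω₁ → ℕ} (hτ : ∀ j, Measurable (τ j)) (N : ℕ) (b h : ℝ) (y : Ω₂) :
    pinZ P Q τ ω N b h y = patternZ (Finset.Icc 1 N) (patternProb P τ N) (pinField Q ω h b y) := by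
  rw [← integral_exp_sum_mul_pinDelta P hτ]
  simp only [pinZ, pinField, add_sub_assoc]

lemma measurable_pinField (hm : ∀ n, Measurable (ω n)) (h b : ℝ) :
    Measurable (pinField Q ω h b) :=
  measurable_pi_lambda _ fun n => ((hm n).const_mul b).add_const _

lemma hasDerivAt_pinField (hint : ∀ t, Integrable (fun y => exp (t * ω 1 y)) Q)
    (h b : ℝ) (y : Ω₂) (n : ℕ) :
    HasDerivAt (fun t => pinField Q ω h t y n) (ω n y - deriv (cgf (ω 1) Q) b) b := by
  have hb : b ∈ interior (integrableExpSet (ω 1) Q) := by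
    simp [interior_integrableExpSet_eq_univ hint]
  exact (hasDerivAt_mul_const (ω n y)).add
    ((analyticAt_cgf hb).differentiableAt.hasDerivAt.const_sub h) |>.congr_deriv (by ring)

lemma indepFun_update (hiID : iIndepFun ω Q) (hm : ∀ n, Measurable (ω n)) (n : ℕ) (c : ℝ)
    {F : (ℕ → ℝ) → ℝ} (hF : Measurable F) :
    IndepFun (ω n) (fun y => F (Function.update (fun m => ω m y) n c)) Q := by
  rw [IndepFun_iff_Indep]
  have hI := indep_iSup_of_disjoint (fun i => (hm i).comap_le)
    ((iIndepFun_iff_iIndep _ _ _).mp hiID) (disjoint_compl_right (a := ({n} : Set ℕ)))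
  have hupd := measurable_update_of_ne (mΩ := ⨆ i ∈ ({n}ᶜ : Set ℕ), (inferInstance :
    MeasurableSpace ℝ).comap (ω i)) (fun i hin => (comap_measurable (ω i)).mono
      (le_iSup₂_of_le i hin le_rfl) le_rfl) c
  exact indep_of_indep_of_le hI (le_iSup₂_of_le n rfl le_rfl) (hF.comp hupd).comap_le

variable {S : Finset ℕ} {p : Finset ℕ → ℝ}

lemma integrable_mul_patternGibbs (hp : ∀ J, 0 ≤ p J) {f : Ω₂ → ℝ} (hf : Integrable f Q)
    {a : Ω₂ → ℕ → ℝ} (ha : Measurable a) (n : ℕ) :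
    Integrable (fun y => f y * patternGibbs S p (a y) n) Q :=
  hf.mul_bdd ((measurable_patternGibbs S p n).comp ha).aestronglyMeasurable
    (Eventually.of_forall fun y => by
      obtain ⟨h0, h1⟩ := patternGibbs_mem_Icc (S := S) hp (a y) n
      rwa [norm_of_nonneg h0])

lemma integral_sub_mul_patternGibbs_nonpos [IsFiniteMeasure Q] (hiID : iIndepFun ω Q)
    (hm : ∀ n, Measurable (ω n)) (hp : ∀ J, 0 ≤ p J) (n : ℕ) {β c u : ℝ} (hβ : 0 ≤ β)
    (hX : Integrable (ω n) Q)
    (hc : Integrable (fun y => (ω n y - c) * exp (β * (ω n y - c))) Q ∧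
      ∫ y, (ω n y - c) * exp (β * (ω n y - c)) ∂Q = 0) :
    ∫ y, (ω n y - c) * patternGibbs S p (fun m => β * ω m y + u) n ∂Q ≤ 0 := by
  set R : (ℕ → ℝ) → ℝ := fun v => patternGibbs S p (fun m => β * v m + u) n
  have hR : Measurable R := (measurable_patternGibbs S p n).comp (by fun_prop)
  have hpt : ∀ y, (ω n y - c) * patternGibbs S p (fun m => β * ω m y + u) n
      ≤ (ω n y - c) * exp (β * (ω n y - c)) * R (Function.update (fun m => ω m y) n c) := by
    intro y
    have hupd : Function.update (fun m => β * ω m y + u) n (β * c + u)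
        = fun m => β * Function.update (fun m => ω m y) n c m + u :=
      funext fun m => (Function.apply_update (fun _ x => β * x + u) _ n c m).symm
    have key := mul_patternGibbs_le (S := S) hp (fun m => β * ω m y + u) n (t := β * c + u)
      (d := ω n y - c) (by nlinarith [sq_nonneg (ω n y - c)])
    rwa [hupd, show β * ω n y + u - (β * c + u) = β * (ω n y - c) by ring, ← mul_assoc] at key
  have hmR : Measurable fun y => R (Function.update (fun m => ω m y) n c) :=
    hR.comp (measurable_update_of_ne (fun i _ => hm i) c)
  calc ∫ y, (ω n y - c) * patternGibbs S p (fun m => β * ω m y + u) n ∂Q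
      ≤ ∫ y, (ω n y - c) * exp (β * (ω n y - c)) * R (Function.update (fun m => ω m y) n c) ∂Q :=
        integral_mono (integrable_mul_patternGibbs hp (hX.sub (integrable_const c))
          (by fun_prop) n) (integrable_mul_patternGibbs hp hc.1 (by fun_prop) n) hpt
    _ = (∫ y, (ω n y - c) * exp (β * (ω n y - c)) ∂Q)
          * ∫ y, R (Function.update (fun m => ω m y) n c) ∂Q :=
        ((indepFun_update hiID hm n c hR).comp (φ := fun x => (x - c) * exp (β * (x - c)))
          (by fun_prop) measurable_id).integral_fun_mul_eq_mul_integral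
          hc.1.aestronglyMeasurable hmR.aestronglyMeasurable
    _ = 0 := by rw [hc.2, zero_mul]

end Disorder

section Derivative

variable [MeasurableSpace Ω₂] {Q : Measure Ω₂} {ω : ℕ → Ω₂ → ℝ} {S : Finset ℕ}
  {p : Finset ℕ → ℝ}

lemma hasDerivAt_integral_log_patternZ_pinField (hdis : IsDisorder Q ω) (hp : ∀ J, 0 ≤ p J)
    (h β : ℝ) :
    HasDerivAt (fun b => ∫ y, log (patternZ S p (pinField Q ω h b y)) ∂Q)
      (∫ y, ∑ n ∈ S, (ω n y - deriv (cgf (ω 1) Q) β)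
        * patternGibbs S p (pinField Q ω h β y) n ∂Q) β := by
  have ⟨hQ, hm, _⟩ := hdis
  obtain ⟨C, hC⟩ := (isCompact_closedBall β 1).exists_bound_of_continuousOn
    (continuous_deriv_cgf (hdis.integrable_exp_mul 1)).continuousOn
  have hlog : Integrable (fun y => log (patternZ S p (pinField Q ω h β y))) Q :=
    Integrable.mono' ((integrable_finsetSum S fun n _ =>
        (((hdis.integrable n).const_mul β).add (integrable_const _)).abs).add
        (integrable_const |log (patternZ S p 0)|))
      ((measurable_patternZ S p).comp (measurable_pinField hm h β)).log.aestronglyMeasurable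
      (Eventually.of_forall fun y => abs_log_patternZ_le hp (pinField Q ω h β y))
  refine (hasDerivAt_integral_of_dominated_loc_of_deriv_le
    (bound := fun y => ∑ n ∈ S, (|ω n y| + C)) (Metric.ball_mem_nhds β one_pos)
    (Eventually.of_forall fun b =>
      ((measurable_patternZ S p).comp (measurable_pinField hm h b)).log.aestronglyMeasurable)
    hlog ?_ (Eventually.of_forall fun y b hb => ?_)
    (integrable_finsetSum S fun n _ => (hdis.integrable n).abs.add (integrable_const C))
    (Eventually.of_forall fun y b _ => hasDerivAt_log_patternZ hp fun n =>
      hasDerivAt_pinField (hdis.integrable_exp_mul 1) h b y n)).2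
  · exact (Finset.measurable_sum S fun n _ => ((hm n).sub_const _).mul
      ((measurable_patternGibbs S p n).comp (measurable_pinField hm h β))).aestronglyMeasurable
  · refine (norm_sum_le _ _).trans (Finset.sum_le_sum fun n _ => ?_)
    obtain ⟨h0, h1⟩ := patternGibbs_mem_Icc (S := S) hp (pinField Q ω h b y) n
    have hCb : |deriv (cgf (ω 1) Q) b| ≤ C := hC b (Metric.ball_subset_closedBall hb)
    rw [norm_mul, norm_of_nonneg h0, Real.norm_eq_abs]
    calc |ω n y - deriv (cgf (ω 1) Q) b| * patternGibbs S p (pinField Q ω h b y) n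
        ≤ |ω n y - deriv (cgf (ω 1) Q) b| := mul_le_of_le_one_right (abs_nonneg _) h1
      _ ≤ |ω n y| + C := (abs_sub _ _).trans (by gcongr)

lemma integral_sum_sub_mul_patternGibbs_nonpos (hdis : IsDisorder Q ω) (hp : ∀ J, 0 ≤ p J)
    (h : ℝ) {β : ℝ} (hβ : 0 ≤ β) :
    ∫ y, ∑ n ∈ S, (ω n y - deriv (cgf (ω 1) Q) β)
      * patternGibbs S p (pinField Q ω h β y) n ∂Q ≤ 0 := by
  have ⟨hQ, hm, hiID, hid, _⟩ := hdis
  rw [integral_finsetSum S fun n _ => integrable_mul_patternGibbs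
    (f := fun y => ω n y - deriv (cgf (ω 1) Q) β) hp
    ((hdis.integrable n).sub (integrable_const _)) (measurable_pinField hm h β) n]
  refine Finset.sum_nonpos fun n _ => ?_
  have hcgf : cgf (ω n) Q = cgf (ω 1) Q := by
    unfold cgf; rw [mgf_congr_identDistrib (hid n)]
  exact integral_sub_mul_patternGibbs_nonpos hiID hm hp n hβ (hdis.integrable n)
    (hcgf ▸ integral_sub_mul_exp_sub_eq_zero (hdis.integrable_exp_mul n) β)

end Derivative

end Pinning

open Pinning in
theorem statement5_general
    {Ω₁ Ω₂ : Type*} [MeasurableSpace Ω₁] [MeasurableSpace Ω₂]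
    (P : Measure Ω₁) (Q : Measure Ω₂) (τ : ℕ → Ω₁ → ℕ) (ω : ℕ → Ω₂ → ℝ)
    (K : ℕ → ℝ)
    (hren : IsRenewal P τ K) (hdis : IsDisorder Q ω) :
    ∀ (N : ℕ) (h : ℝ),
      AntitoneOn (fun β => ∫ y, Real.log (pinZ P Q τ ω N β h y) ∂Q) (Ici 0) ∧
      ∀ β : ℝ, 0 ≤ β →
        deriv (fun b => ∫ y, Real.log (pinZ P Q τ ω N b h y) ∂Q) β
            = ∫ y, deriv (fun b => Real.log (pinZ P Q τ ω N b h y)) β ∂Q ∧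
        deriv (fun b => ∫ y, Real.log (pinZ P Q τ ω N b h y) ∂Q) β ≤ 0 := by
  obtain ⟨hP, -, hτ, -⟩ := hren
  intro N h
  have hp : ∀ J, 0 ≤ patternProb P τ N J := fun _ => measureReal_nonneg
  simp only [pinZ_eq_patternZ P hτ]
  have hderiv := hasDerivAt_integral_log_patternZ_pinField (S := Finset.Icc 1 N) hdis hp h
  have hnonpos := fun β (hβ : 0 ≤ β) =>
    integral_sum_sub_mul_patternGibbs_nonpos (S := Finset.Icc 1 N) hdis hp h hβ
  refine ⟨antitoneOn_of_deriv_nonpos (convex_Ici 0)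
    (fun β _ => (hderiv β).continuousAt.continuousWithinAt)
    (fun β _ => (hderiv β).differentiableAt.differentiableWithinAt) fun β hβ => ?_,
    fun β hβ => ?_⟩
  · rw [(hderiv β).deriv]
    exact hnonpos β (interior_subset hβ)
  · rw [(hderiv β).deriv]
    refine ⟨integral_congr_ae (Eventually.of_forall fun y => ?_), hnonpos β hβ⟩
    exact ((hasDerivAt_log_patternZ hp fun n =>
      hasDerivAt_pinField (hdis.integrable_exp_mul 1) h β y n).deriv).symm

/-- the finite-volume monotonicity behind Proposition 6.1:
`β ↦ 𝔼[log Z_{N,ω}(β,h)]` is non-increasing on `[0,∞)`; equivalently its derivative equals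
`𝔼[(∂/∂β) log Z_{N,ω}(β,h)]` and is `≤ 0`. -/
theorem statement5
    {Ω₁ Ω₂ : Type*} [MeasurableSpace Ω₁] [MeasurableSpace Ω₂]
    (P : Measure Ω₁) (Q : Measure Ω₂) (τ : ℕ → Ω₁ → ℕ) (ω : ℕ → Ω₂ → ℝ)
    (K : ℕ → ℝ) (L : ℝ → ℝ) (α : ℝ)
    (hren : IsRenewal P τ K) (hdis : IsDisorder Q ω)
    (hL : SlowlyVarying L) (hα : 0 ≤ α) (htail : HasRegVaryingTail K L α) :
    ∀ (N : ℕ) (h : ℝ),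
      AntitoneOn (fun β => ∫ y, Real.log (pinZ P Q τ ω N β h y) ∂Q) (Ici 0) ∧
      ∀ β : ℝ, 0 ≤ β →
        deriv (fun b => ∫ y, Real.log (pinZ P Q τ ω N b h y) ∂Q) β
            = ∫ y, deriv (fun b => Real.log (pinZ P Q τ ω N b h y)) β ∂Q ∧
        deriv (fun b => ∫ y, Real.log (pinZ P Q τ ω N b h y) ∂Q) β ≤ 0 :=
  statement5_general P Q τ ω K hren hdis

end
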